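/- Let n ≥ 3, λ : 𝕋ⁿ → ℝ smooth positive, H(p,q) = (λ(q)/2)|p|², and μ the Liouville measure dμ = λ^{−n/2} dσ dq on {H = 1/2}. Then σ(H) := ∫_{{H=1/2}} tr( H_{qq} − H_{qp}H_{pp}^{−1}H_{pq} ) dμ = Vol(Sⁿ⁻¹)·((n−2)/4)·∫_{𝕋ⁿ} λ^{−2−n/2} |∇λ|² dq ≥ 0, and σ(H) = 0 if and only if λ is constant. -/

import Mathlib

open MeasureTheory Real Filter Matrix

noncomputable section

/-- Partial derivative of `f` in the `i`-th coordinate direction. -/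
def pd {n : ℕ} (i : Fin n) (f : (Fin n → ℝ) → ℝ) (x : Fin n → ℝ) : ℝ :=
  fderiv ℝ f x (Pi.single i 1)

/-- `f : ℝⁿ → ℝ` is ℤⁿ-periodic, i.e. descends to the torus 𝕋ⁿ = ℝⁿ/ℤⁿ. -/
def Zperiodic {n : ℕ} (f : (Fin n → ℝ) → ℝ) : Prop :=
  ∀ (x : Fin n → ℝ) (m : Fin n → ℤ), f (x + fun i => (m i : ℝ)) = f x

/-- Fundamental domain of the torus 𝕋ⁿ = ℝⁿ/ℤⁿ. -/
def cube (n : ℕ) : Set (Fin n → ℝ) := Set.univ.pi fun _ => Set.Ioc (0:ℝ) 1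

/-- Euclidean Laplacian Δf = Σᵢ ∂²f/∂qᵢ². -/
def lap {n : ℕ} (f : (Fin n → ℝ) → ℝ) (x : Fin n → ℝ) : ℝ := ∑ i, pd i (pd i f) x

/-- Squared Euclidean norm of the gradient, |∇f|² = Σᵢ (∂f/∂qᵢ)². -/
def gradSq {n : ℕ} (f : (Fin n → ℝ) → ℝ) (x : Fin n → ℝ) : ℝ := ∑ i, (pd i f x) ^ 2

/-- Partial derivative in the `i`-th momentum variable of `H(p,q)`. -/
def pdP {n : ℕ} (i : Fin n) (H : (Fin n → ℝ) → (Fin n → ℝ) → ℝ)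
    (p q : Fin n → ℝ) : ℝ := fderiv ℝ (fun p' => H p' q) p (Pi.single i 1)

/-- Partial derivative in the `j`-th position variable of `H(p,q)`. -/
def pdQ {n : ℕ} (j : Fin n) (H : (Fin n → ℝ) → (Fin n → ℝ) → ℝ)
    (p q : Fin n → ℝ) : ℝ := fderiv ℝ (fun q' => H p q') q (Pi.single j 1)

/-- (H_pp)ᵢⱼ = ∂²H/∂pᵢ∂pⱼ. -/
def Hpp {n : ℕ} (H : (Fin n → ℝ) → (Fin n → ℝ) → ℝ) (p q : Fin n → ℝ) :
    Matrix (Fin n) (Fin n) ℝ := Matrix.of fun i j => pdP i (pdP j H) p q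

/-- (H_pq)ᵢⱼ = ∂²H/∂pᵢ∂qⱼ. -/
def Hpq {n : ℕ} (H : (Fin n → ℝ) → (Fin n → ℝ) → ℝ) (p q : Fin n → ℝ) :
    Matrix (Fin n) (Fin n) ℝ := Matrix.of fun i j => pdP i (pdQ j H) p q

/-- (H_qp)ᵢⱼ = ∂²H/∂qᵢ∂pⱼ. -/
def Hqp {n : ℕ} (H : (Fin n → ℝ) → (Fin n → ℝ) → ℝ) (p q : Fin n → ℝ) :
    Matrix (Fin n) (Fin n) ℝ := Matrix.of fun i j => pdQ i (pdP j H) p q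

/-- (H_qq)ᵢⱼ = ∂²H/∂qᵢ∂qⱼ. -/
def Hqq {n : ℕ} (H : (Fin n → ℝ) → (Fin n → ℝ) → ℝ) (p q : Fin n → ℝ) :
    Matrix (Fin n) (Fin n) ℝ := Matrix.of fun i j => pdQ i (pdQ j H) p q

/-- Jacobian matrix (Dα)ᵢⱼ = ∂αᵢ/∂qⱼ of a 1-form α on the torus. -/
def Dmat {n : ℕ} (α : (Fin n → ℝ) → (Fin n → ℝ)) (q : Fin n → ℝ) :
    Matrix (Fin n) (Fin n) ℝ := Matrix.of fun i j => pd j (fun x => α x i) q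

set_option linter.unusedSectionVars false

variable {n : ℕ}

lemma hasFDerivAt_sumsq (p : Fin n → ℝ) :
    HasFDerivAt (fun p : Fin n → ℝ => ∑ k, p k ^ 2)
      (∑ k, (2 * p k) • ContinuousLinearMap.proj (R := ℝ) (φ := fun _ : Fin n => ℝ) k) p := by
  have : ∀ k : Fin n, HasFDerivAt (fun p : Fin n → ℝ => p k ^ 2)
      ((2 * p k) • ContinuousLinearMap.proj (R := ℝ) (φ := fun _ : Fin n => ℝ) k) p := by
    intro k
    have h1 : HasDerivAt (fun y : ℝ => y ^ 2) (2 * p k) (p k) := by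
      simpa using hasDerivAt_pow 2 (p k)
    have h2 : HasFDerivAt (fun f : Fin n → ℝ => f k)
        (ContinuousLinearMap.proj (R := ℝ) (φ := fun _ : Fin n => ℝ) k) p :=
      hasFDerivAt_apply k p
    exact h1.comp_hasFDerivAt p h2
  simpa using HasFDerivAt.fun_sum (fun k _ => this k)

lemma contDiff_pd {f : (Fin n → ℝ) → ℝ} (hf : ContDiff ℝ (⊤ : ℕ∞) f) (i : Fin n) :
    ContDiff ℝ (⊤ : ℕ∞) (pd i f) := by
  have h1 : ContDiff ℝ (⊤ : ℕ∞) (fderiv ℝ f) := hf.fderiv_right (by simp)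
  exact (ContinuousLinearMap.apply ℝ ℝ (Pi.single i 1)).contDiff.comp h1

lemma pd_of_hasFDerivAt {f : (Fin n → ℝ) → ℝ} {L : (Fin n → ℝ) →L[ℝ] ℝ} {x : Fin n → ℝ}
    (h : HasFDerivAt f L x) (i : Fin n) : pd i f x = L (Pi.single i 1) := by
  rw [pd, h.fderiv]

section derivs
variable {l : (Fin n → ℝ) → ℝ} (hl : ContDiff ℝ (⊤ : ℕ∞) l)
variable {H : (Fin n → ℝ) → (Fin n → ℝ) → ℝ} (hH : H = fun p q => l q / 2 * ∑ i, (p i) ^ 2)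
include hH

lemma sum_single_eval (v : Fin n → ℝ) (j : Fin n) :
    (∑ k, (2 * v k) • ContinuousLinearMap.proj (R := ℝ) (φ := fun _ : Fin n => ℝ) k)
      (Pi.single j 1) = 2 * v j := by
  simp [ContinuousLinearMap.sum_apply, Pi.single_apply, mul_ite, Finset.sum_ite_eq']

omit hH in
lemma pd_sumsq_apply (p : Fin n → ℝ) (c : ℝ) (i : Fin n) :
    pd i (fun p' : Fin n → ℝ => c * ∑ k, p' k ^ 2) p = c * (2 * p i) := by
  have h := ((hasFDerivAt_sumsq p).const_mul c)
  rw [pd_of_hasFDerivAt h i]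
  simp only [ContinuousLinearMap.smul_apply, ContinuousLinearMap.sum_apply,
    ContinuousLinearMap.smul_apply, ContinuousLinearMap.proj_apply, smul_eq_mul]
  rw [Finset.sum_congr rfl (fun k _ => by rw [Pi.single_apply])]
  simp [mul_ite, Finset.sum_ite_eq']

lemma pdP_H (p q : Fin n → ℝ) (j : Fin n) : pdP j H p q = l q * p j := by
  subst hH
  rw [pdP]
  have : (fun p' : Fin n → ℝ => l q / 2 * ∑ i, p' i ^ 2) = fun p' => l q / 2 * ∑ i, p' i ^ 2 := rfl
  rw [show fderiv ℝ (fun p' : Fin n → ℝ => l q / 2 * ∑ i, p' i ^ 2) p (Pi.single j 1)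
      = pd j (fun p' : Fin n → ℝ => l q / 2 * ∑ k, p' k ^ 2) p from rfl]
  rw [pd_sumsq_apply]
  ring

include hl

lemma pdQ_H (p q : Fin n → ℝ) (j : Fin n) :
    pdQ j H p q = (∑ k, p k ^ 2) / 2 * pd j l q := by
  subst hH
  rw [pdQ]
  have h : HasFDerivAt (fun q' => l q' / 2 * ∑ i, p i ^ 2)
      (((∑ i, p i ^ 2) / 2) • fderiv ℝ l q) q := by
    have h0 : HasFDerivAt l (fderiv ℝ l q) q :=
      (hl.differentiable (by simp) q).hasFDerivAt
    have := h0.mul_const ((∑ i, p i ^ 2) / 2)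
    have hfun : (fun q' => l q' / 2 * ∑ i, p i ^ 2) = fun y => l y * ((∑ i, p i ^ 2) / 2) := by
      funext q'
      ring
    rw [hfun]
    exact this
  rw [h.fderiv]
  simp [pd, mul_comm]
end derivs

section derivs2
variable {l : (Fin n → ℝ) → ℝ} (hl : ContDiff ℝ (⊤ : ℕ∞) l)
variable {H : (Fin n → ℝ) → (Fin n → ℝ) → ℝ} (hH : H = fun p q => l q / 2 * ∑ i, (p i) ^ 2)
include hH

lemma Hpp_eq (p q : Fin n → ℝ) : Hpp H p q = l q • (1 : Matrix (Fin n) (Fin n) ℝ) := by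
  ext i j
  show pdP i (pdP j H) p q = _
  rw [pdP]
  have hf : (fun p' => pdP j H p' q) = fun p' : Fin n → ℝ => l q * p' j := by
    funext p'; exact pdP_H hH p' q j
  rw [hf]
  have h : HasFDerivAt (fun p' : Fin n → ℝ => l q * p' j)
      (l q • ContinuousLinearMap.proj (R := ℝ) (φ := fun _ : Fin n => ℝ) j) p := by
    have := (hasFDerivAt_apply (𝕜 := ℝ) j p).const_mul (l q)
    simpa using this
  rw [h.fderiv]
  simp [Pi.single_apply, Matrix.smul_apply, Matrix.one_apply, eq_comm]

include hl

lemma Hpq_eq (p q : Fin n → ℝ) (i j : Fin n) : Hpq H p q i j = pd j l q * p i := by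
  show pdP i (pdQ j H) p q = _
  rw [pdP]
  have hf : (fun p' => pdQ j H p' q) = fun p' : Fin n → ℝ =>
      (pd j l q / 2) * ∑ k, p' k ^ 2 := by
    funext p'; rw [pdQ_H hl hH p' q j]; ring
  rw [hf]
  rw [show fderiv ℝ (fun p' : Fin n → ℝ => pd j l q / 2 * ∑ k, p' k ^ 2) p (Pi.single i 1)
      = pd i (fun p' : Fin n → ℝ => pd j l q / 2 * ∑ k, p' k ^ 2) p from rfl]
  rw [pd_sumsq_apply]
  ring

lemma Hqp_eq (p q : Fin n → ℝ) (i j : Fin n) : Hqp H p q i j = pd i l q * p j := by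
  show pdQ i (pdP j H) p q = _
  rw [pdQ]
  have hf : (fun q' => pdP j H p q') = fun q' : Fin n → ℝ => l q' * p j := by
    funext q'; exact pdP_H hH p q' j
  rw [hf]
  have h : HasFDerivAt (fun q' : Fin n → ℝ => l q' * p j) ((p j) • fderiv ℝ l q) q :=
    (hl.differentiable (by simp) q).hasFDerivAt.mul_const (p j)
  rw [h.fderiv]
  simp [pd, mul_comm]

lemma Hqq_eq (p q : Fin n → ℝ) (i j : Fin n) :
    Hqq H p q i j = (∑ k, p k ^ 2) / 2 * pd i (pd j l) q := by
  show pdQ i (pdQ j H) p q = _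
  rw [pdQ]
  have hf : (fun q' => pdQ j H p q') = fun q' : Fin n → ℝ =>
      ((∑ k, p k ^ 2) / 2) * pd j l q' := by
    funext q'; exact pdQ_H hl hH p q' j
  rw [hf]
  have h : HasFDerivAt (fun q' : Fin n → ℝ => ((∑ k, p k ^ 2) / 2) * pd j l q')
      (((∑ k, p k ^ 2) / 2) • fderiv ℝ (pd j l) q) q :=
    (((contDiff_pd hl j).differentiable (by simp) q).hasFDerivAt).const_mul _
  rw [h.fderiv]
  simp [pd]

lemma trace_key (p q : Fin n → ℝ) (hpos : 0 < l q) :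
    Matrix.trace (Hqq H p q - Hqp H p q * (Hpp H p q)⁻¹ * Hpq H p q)
      = (∑ k, p k ^ 2) / 2 * lap l q - (l q)⁻¹ * (∑ k, p k ^ 2) * gradSq l q := by
  have hinv : (Hpp H p q)⁻¹ = (l q)⁻¹ • (1 : Matrix (Fin n) (Fin n) ℝ) := by
    rw [Hpp_eq hH]
    apply Matrix.inv_eq_right_inv
    rw [Matrix.smul_mul, Matrix.mul_smul, smul_smul, mul_inv_cancel₀ hpos.ne',
      Matrix.one_mul, one_smul]
  rw [hinv, Matrix.mul_smul, Matrix.mul_one, Matrix.smul_mul, Matrix.trace_sub,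
    Matrix.trace_smul]
  have h1 : Matrix.trace (Hqq H p q) = (∑ k, p k ^ 2) / 2 * lap l q := by
    rw [Matrix.trace, lap, Finset.mul_sum]
    exact Finset.sum_congr rfl fun i _ => Hqq_eq hl hH p q i i
  have h2 : Matrix.trace (Hqp H p q * Hpq H p q) = (∑ k, p k ^ 2) * gradSq l q := by
    rw [Matrix.trace]
    have : ∀ i : Fin n, (Hqp H p q * Hpq H p q).diag i = (pd i l q) ^ 2 * ∑ k, p k ^ 2 := by
      intro i
      show ∑ k, Hqp H p q i k * Hpq H p q k i = _
      rw [Finset.mul_sum]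
      refine Finset.sum_congr rfl fun k _ => ?_
      rw [Hqp_eq hl hH, Hpq_eq hl hH]
      ring
    rw [Finset.sum_congr rfl fun i _ => this i, gradSq, ← Finset.sum_mul, mul_comm]
  rw [h1, h2, smul_eq_mul]
  ring

end derivs2

section periodic
variable {f : (Fin n → ℝ) → ℝ}

lemma fderiv_periodic (hf : Differentiable ℝ f) (hper : Zperiodic f)
    (x : Fin n → ℝ) (m : Fin n → ℤ) :
    fderiv ℝ f (x + fun i => (m i : ℝ)) = fderiv ℝ f x := by
  set c : Fin n → ℝ := fun i => (m i : ℝ)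
  have hd : HasFDerivAt f (fderiv ℝ f (x + c)) (x + c) := (hf (x + c)).hasFDerivAt
  have hcomp : HasFDerivAt (fun y => f (y + c)) (fderiv ℝ f (x + c)) x := by
    have hid : HasFDerivAt (fun y : Fin n → ℝ => y + c)
        (ContinuousLinearMap.id ℝ (Fin n → ℝ)) x := (hasFDerivAt_id x).add_const c
    have := hd.comp x hid
    rw [ContinuousLinearMap.comp_id] at this
    exact this
  have heq : (fun y => f (y + c)) = f := funext fun y => hper y m
  rw [heq] at hcomp
  exact (hcomp.fderiv).symm

lemma pd_periodic (hf : Differentiable ℝ f) (hper : Zperiodic f) (i : Fin n) :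
    Zperiodic (pd i f) := fun x m => by
  rw [pd, pd, fderiv_periodic hf hper]
end periodic

lemma insertNth_one_eq {m : ℕ} (i : Fin (m + 1)) (x : Fin m → ℝ) :
    i.insertNth 1 x = i.insertNth 0 x + fun k => (((Pi.single i 1 : Fin (m+1) → ℤ) k : ℝ)) := by
  funext k
  rcases eq_or_ne k i with rfl | hk
  · simp
  · rcases Fin.exists_succAbove_eq hk with ⟨k', rfl⟩
    simp [Pi.single_apply, (Fin.succAbove_ne i k').symm, Fin.succAbove_ne i k']

lemma integral_pd_zero {m : ℕ} {F : (Fin (m + 1) → ℝ) → ℝ} (hF : ContDiff ℝ (⊤ : ℕ∞) F)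
    (hper : Zperiodic F) (i : Fin (m + 1)) :
    ∫ x in cube (m + 1), pd i F x = 0 := by
  have hcongr : ∫ x in cube (m+1), pd i F x = ∫ x in Set.Icc (0 : Fin (m+1) → ℝ) 1, pd i F x := by
    apply setIntegral_congr_set
    rw [cube, volume_pi, Set.Icc]
    exact (MeasureTheory.Measure.univ_pi_Ioc_ae_eq_Icc
      (f := fun _ : Fin (m+1) => (0:ℝ)) (g := fun _ => 1))
  rw [hcongr]
  classical
  set f : Fin (m+1) → (Fin (m+1) → ℝ) → ℝ := fun j => if j = i then F else fun _ => 0 with hf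
  set f' : Fin (m+1) → (Fin (m+1) → ℝ) → (Fin (m+1) → ℝ) →L[ℝ] ℝ :=
    fun j x => if j = i then fderiv ℝ F x else 0 with hf'
  have hsum : (fun x => ∑ j, f' j x (Pi.single j 1)) = pd i F := by
    funext x
    rw [Finset.sum_eq_single i]
    · simp [hf', pd]
    · intro j _ hj; simp [hf', hj]
    · intro h; exact absurd (Finset.mem_univ i) h
  have Hc : ∀ j, ContinuousOn (f j) (Set.Icc (0 : Fin (m+1) → ℝ) 1) := by
    intro j
    rcases eq_or_ne j i with rfl | hj
    · simp only [hf, if_pos rfl]; exact hF.continuous.continuousOn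
    · simp only [hf, if_neg hj]; exact continuousOn_const
  have Hd : ∀ x ∈ (Set.pi Set.univ fun k => Set.Ioo ((0 : Fin (m+1) → ℝ) k) ((1 : Fin (m+1) → ℝ) k))
      \ (∅ : Set (Fin (m+1) → ℝ)), ∀ j, HasFDerivAt (f j) (f' j x) x := by
    intro x _ j
    rcases eq_or_ne j i with rfl | hj
    · simp only [hf, hf', if_pos rfl]
      exact (hF.differentiable (by simp) x).hasFDerivAt
    · simp only [hf, hf', if_neg hj]
      exact hasFDerivAt_const 0 x
  have Hi : IntegrableOn (fun x => ∑ j, f' j x (Pi.single j 1))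
      (Set.Icc (0 : Fin (m+1) → ℝ) 1) := by
    rw [hsum]
    exact ((contDiff_pd hF i).continuous.continuousOn).integrableOn_compact isCompact_Icc
  have hdiv := integral_divergence_of_hasFDerivAt_off_countable'
    (a := (0 : Fin (m+1) → ℝ)) (b := 1) (fun _ => zero_le_one) f f' ∅ Set.countable_empty Hc Hd Hi
  rw [hsum] at hdiv
  rw [hdiv]
  apply Finset.sum_eq_zero
  intro j _
  rcases eq_or_ne j i with rfl | hj
  · have : ∀ x : Fin m → ℝ, f j (j.insertNth ((1 : Fin (m+1) → ℝ) j) x)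
        = f j (j.insertNth ((0 : Fin (m+1) → ℝ) j) x) := by
      intro x
      simp only [hf, if_pos rfl, Pi.one_apply, Pi.zero_apply]
      rw [insertNth_one_eq j x]
      exact hper _ _
    rw [setIntegral_congr_fun measurableSet_Icc (fun x _ => this x), sub_self]
  · simp [hf, if_neg hj]

section ibp
variable {m : ℕ} {l : (Fin (m+1) → ℝ) → ℝ} (hl : ContDiff ℝ (⊤ : ℕ∞) l)
  (hpos : ∀ x, 0 < l x) (hper : Zperiodic l)
include hl hpos

lemma contDiff_rpow (c : ℝ) : ContDiff ℝ (⊤ : ℕ∞) fun q => l q ^ c :=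
  hl.rpow_const_of_ne fun x => (hpos x).ne'

lemma pd_rpow (c : ℝ) (i : Fin (m+1)) (q : Fin (m+1) → ℝ) :
    pd i (fun x => l x ^ c) q = c * l q ^ (c - 1) * pd i l q := by
  have h1 : HasDerivAt (fun y : ℝ => y ^ c) (c * l q ^ (c - 1)) (l q) := by
    have := Real.hasDerivAt_rpow_const (x := l q) (p := c) (Or.inl (hpos q).ne')
    simpa [mul_comm] using this
  have h2 : HasFDerivAt l (fderiv ℝ l q) q := (hl.differentiable (by simp) q).hasFDerivAt
  have h := h1.comp_hasFDerivAt q h2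
  have h' : HasFDerivAt (fun x => l x ^ c) ((c * l q ^ (c - 1)) • fderiv ℝ l q) q := h
  rw [pd, h'.fderiv]
  simp [pd, mul_assoc]

include hper

lemma integral_lap_eq (c : ℝ) :
    ∫ q in cube (m+1), l q ^ c * lap l q
      = -c * ∫ q in cube (m+1), l q ^ (c - 1) * gradSq l q := by
  classical
  set F : Fin (m+1) → (Fin (m+1) → ℝ) → ℝ := fun i q => l q ^ c * pd i l q with hFdef
  have hFsmooth : ∀ i, ContDiff ℝ (⊤ : ℕ∞) (F i) := fun i =>
    (contDiff_rpow hl hpos c).mul (contDiff_pd hl i)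
  have hFper : ∀ i, Zperiodic (F i) := by
    intro i x mm
    simp only [hFdef]
    rw [hper x mm, pd_periodic (hl.differentiable (by simp)) hper i x mm]
  have hpdF : ∀ i q, pd i (F i) q
      = l q ^ c * pd i (pd i l) q + c * l q ^ (c - 1) * (pd i l q) ^ 2 := by
    intro i q
    have h1 : HasFDerivAt (fun x => l x ^ c)
        (fderiv ℝ (fun x => l x ^ c) q) q :=
      ((contDiff_rpow hl hpos c).differentiable (by simp) q).hasFDerivAt
    have h2 : HasFDerivAt (pd i l) (fderiv ℝ (pd i l) q) q :=
      ((contDiff_pd hl i).differentiable (by simp) q).hasFDerivAt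
    have h := h1.fun_mul h2
    rw [show pd i (F i) q = fderiv ℝ (fun x => l x ^ c * pd i l x) q (Pi.single i 1) from rfl,
      h.fderiv]
    simp only [ContinuousLinearMap.add_apply, ContinuousLinearMap.smul_apply, smul_eq_mul]
    rw [show fderiv ℝ (fun x => l x ^ c) q (Pi.single i 1) = pd i (fun x => l x ^ c) q from rfl,
      pd_rpow hl hpos]
    show l q ^ c * pd i (pd i l) q + pd i l q * (c * l q ^ (c - 1) * pd i l q) = _
    ring
  have hzero : ∀ i, ∫ q in cube (m+1), pd i (F i) q = 0 := fun i =>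
    integral_pd_zero (hFsmooth i) (hFper i) i
  -- integrability facts
  have hIcc : cube (m+1) ⊆ Set.Icc (0 : Fin (m+1) → ℝ) 1 := by
    rw [← Set.pi_univ_Icc]
    exact Set.pi_mono fun i _ => Set.Ioc_subset_Icc_self
  have hcont_lap : Continuous (lap l) := by
    apply continuous_finset_sum
    intro i _
    exact (contDiff_pd (contDiff_pd hl i) i).continuous
  have hcont_grad : Continuous (gradSq l) := by
    apply continuous_finset_sum
    intro i _
    exact ((contDiff_pd hl i).continuous).pow 2
  have hcontA : Continuous fun q => l q ^ c * lap l q :=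
    ((contDiff_rpow hl hpos c).continuous).mul hcont_lap
  have hcontB : Continuous fun q => l q ^ (c - 1) * gradSq l q :=
    ((contDiff_rpow hl hpos (c - 1)).continuous).mul hcont_grad
  have hintA : IntegrableOn (fun q => l q ^ c * lap l q) (cube (m+1)) :=
    (hcontA.continuousOn.integrableOn_compact isCompact_Icc).mono_set hIcc
  have hintB : IntegrableOn (fun q => l q ^ (c - 1) * gradSq l q) (cube (m+1)) :=
    (hcontB.continuousOn.integrableOn_compact isCompact_Icc).mono_set hIcc
  have hintF : ∀ i, IntegrableOn (fun q => pd i (F i) q) (cube (m+1)) := by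
    intro i
    have : Continuous (pd i (F i)) := (contDiff_pd (hFsmooth i) i).continuous
    exact (this.continuousOn.integrableOn_compact isCompact_Icc).mono_set hIcc
  have hsum : ∫ q in cube (m+1),
      (l q ^ c * lap l q + c * (l q ^ (c - 1) * gradSq l q)) = 0 := by
    have he : (fun q => l q ^ c * lap l q + c * (l q ^ (c - 1) * gradSq l q))
        = fun q => ∑ i, pd i (F i) q := by
      funext q
      rw [lap, gradSq, Finset.sum_congr rfl fun i _ => hpdF i q, Finset.sum_add_distrib]
      simp only [Finset.mul_sum]
      congr 1
      exact Finset.sum_congr rfl fun i _ => by ring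
    rw [he, integral_finset_sum _ fun i _ => hintF i]
    exact Finset.sum_eq_zero fun i _ => hzero i
  rw [integral_add hintA ((hintB.const_mul c)), MeasureTheory.integral_const_mul] at hsum
  linarith [hsum]

end ibp

section cubefacts
variable {k : ℕ}

lemma cube_subset_Icc : cube k ⊆ Set.Icc (0 : Fin k → ℝ) 1 := by
  rw [← Set.pi_univ_Icc]
  exact Set.pi_mono fun i _ => Set.Ioc_subset_Icc_self

lemma measurableSet_cube : MeasurableSet (cube k) :=
  MeasurableSet.univ_pi fun _ => measurableSet_Ioc

lemma integrableOn_cube {g : (Fin k → ℝ) → ℝ} (hg : Continuous g) :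
    IntegrableOn g (cube k) :=
  (hg.continuousOn.integrableOn_compact isCompact_Icc).mono_set cube_subset_Icc

lemma cube_subset_closure_interior : cube k ⊆ closure (interior (cube k)) := by
  have h1 : interior (cube k) = Set.univ.pi fun _ : Fin k => Set.Ioo (0:ℝ) 1 := by
    rw [cube, interior_pi_set Set.finite_univ]
    simp [Function.comp_def]
  have h2 : closure (Set.univ.pi fun _ : Fin k => Set.Ioo (0:ℝ) 1)
      = Set.univ.pi fun _ : Fin k => Set.Icc (0:ℝ) 1 := by
    rw [closure_pi_set]
    exact Set.pi_congr rfl fun i _ => closure_Ioo (zero_ne_one (α := ℝ))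
  rw [h1, h2]
  exact Set.pi_mono fun i _ => Set.Ioc_subset_Icc_self

lemma exists_cube_rep (x : Fin k → ℝ) :
    ∃ y ∈ cube k, ∃ mm : Fin k → ℤ, x = y + fun i => (mm i : ℝ) := by
  refine ⟨fun i => x i - ((⌈x i⌉ - 1 : ℤ) : ℝ), ?_, fun i => ⌈x i⌉ - 1, ?_⟩
  · intro i _
    constructor
    · push_cast
      linarith [Int.ceil_lt_add_one (x i)]
    · push_cast
      linarith [Int.le_ceil (x i)]
  · funext i
    simp only [Pi.add_apply]
    push_cast
    ring

end cubefacts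

lemma inner_eq {m : ℕ} {l : (Fin (m+1) → ℝ) → ℝ} (hl : ContDiff ℝ (⊤ : ℕ∞) l)
    (hpos : ∀ x, 0 < l x) (hper : Zperiodic l)
    {H : (Fin (m+1) → ℝ) → (Fin (m+1) → ℝ) → ℝ}
    (hH : H = fun p q => l q / 2 * ∑ i, (p i) ^ 2)
    (σ : Metric.sphere (0 : EuclideanSpace ℝ (Fin (m+1))) 1) :
    (∫ q in cube (m+1),
        Matrix.trace
            (Hqq H (l q ^ (-(1 : ℝ) / 2) • fun i => (σ : EuclideanSpace ℝ (Fin (m+1))) i) q -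
              Hqp H (l q ^ (-(1 : ℝ) / 2) • fun i => (σ : EuclideanSpace ℝ (Fin (m+1))) i) q *
                (Hpp H (l q ^ (-(1 : ℝ) / 2) • fun i => (σ : EuclideanSpace ℝ (Fin (m+1))) i) q)⁻¹ *
                Hpq H (l q ^ (-(1 : ℝ) / 2) • fun i => (σ : EuclideanSpace ℝ (Fin (m+1))) i) q) *
          l q ^ (-(↑(m+1) : ℝ) / 2))
      = ((↑(m+1) : ℝ) - 2) / 4 *
        ∫ q in cube (m+1), l q ^ (-2 - (↑(m+1) : ℝ) / 2) * gradSq l q := by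
  have hnorm : ∑ i, ((σ : EuclideanSpace ℝ (Fin (m+1))) i) ^ 2 = 1 := by
    have h1 : ‖(σ : EuclideanSpace ℝ (Fin (m+1)))‖ = 1 := by
      have h := σ.2
      rwa [mem_sphere_zero_iff_norm] at h
    have h2 := congrArg (· ^ 2) h1
    rw [EuclideanSpace.norm_eq] at h2
    simp only [Real.norm_eq_abs, sq_abs] at h2
    rw [Real.sq_sqrt (Finset.sum_nonneg fun i _ => sq_nonneg _)] at h2
    simpa using h2
  set c₁ : ℝ := -1 - (↑(m+1) : ℝ)/2 with hc₁
  set c₂ : ℝ := -2 - (↑(m+1) : ℝ)/2 with hc₂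
  have hcont_lap : Continuous (lap l) :=
    continuous_finset_sum _ fun i _ => (contDiff_pd (contDiff_pd hl i) i).continuous
  have hcont_grad : Continuous (gradSq l) :=
    continuous_finset_sum _ fun i _ => ((contDiff_pd hl i).continuous).pow 2
  have hptw : ∀ q : Fin (m+1) → ℝ,
      Matrix.trace
          (Hqq H (l q ^ (-(1 : ℝ) / 2) • fun i => (σ : EuclideanSpace ℝ (Fin (m+1))) i) q -
            Hqp H (l q ^ (-(1 : ℝ) / 2) • fun i => (σ : EuclideanSpace ℝ (Fin (m+1))) i) q *
              (Hpp H (l q ^ (-(1 : ℝ) / 2) • fun i => (σ : EuclideanSpace ℝ (Fin (m+1))) i) q)⁻¹ *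
              Hpq H (l q ^ (-(1 : ℝ) / 2) • fun i => (σ : EuclideanSpace ℝ (Fin (m+1))) i) q) *
        l q ^ (-(↑(m+1) : ℝ) / 2)
      = 1/2 * (l q ^ c₁ * lap l q) - l q ^ c₂ * gradSq l q := by
    intro q
    have hS : ∑ k, ((l q ^ (-(1:ℝ)/2) • fun i => (σ : EuclideanSpace ℝ (Fin (m+1))) i) k) ^ 2
        = (l q)⁻¹ := by
      simp only [Pi.smul_apply, smul_eq_mul, mul_pow, ← Finset.mul_sum, hnorm, mul_one]
      rw [pow_two, ← Real.rpow_add (hpos q),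
        show (-(1:ℝ)/2 + -(1:ℝ)/2) = -1 by norm_num, Real.rpow_neg_one]
    rw [trace_key hl hH _ q (hpos q), hS]
    have e1 : (l q)⁻¹ * l q ^ (-(↑(m+1) : ℝ)/2) = l q ^ c₁ := by
      rw [← Real.rpow_neg_one, ← Real.rpow_add (hpos q)]
      congr 1
      rw [hc₁]; ring
    have e2 : (l q)⁻¹ * (l q)⁻¹ * l q ^ (-(↑(m+1) : ℝ)/2) = l q ^ c₂ := by
      rw [mul_assoc, e1, ← Real.rpow_neg_one, ← Real.rpow_add (hpos q)]
      congr 1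
      rw [hc₁, hc₂]; ring
    linear_combination (lap l q / 2) * e1 - gradSq l q * e2
  rw [setIntegral_congr_fun measurableSet_cube fun q _ => hptw q]
  have hintA : IntegrableOn (fun q => l q ^ c₁ * lap l q) (cube (m+1)) :=
    integrableOn_cube (((contDiff_rpow hl hpos c₁).continuous).mul hcont_lap)
  have hintB : IntegrableOn (fun q => l q ^ c₂ * gradSq l q) (cube (m+1)) :=
    integrableOn_cube (((contDiff_rpow hl hpos c₂).continuous).mul hcont_grad)
  have hsplit : ∫ q in cube (m+1), (1/2 * (l q ^ c₁ * lap l q) - l q ^ c₂ * gradSq l q)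
      = 1/2 * (∫ q in cube (m+1), l q ^ c₁ * lap l q)
        - ∫ q in cube (m+1), l q ^ c₂ * gradSq l q := by
    rw [integral_sub (hintA.const_mul (1/2)) hintB, MeasureTheory.integral_const_mul]
  rw [hsplit, integral_lap_eq hl hpos hper c₁, show c₁ - 1 = c₂ by rw [hc₁, hc₂]; ring, hc₁]
  ring

/-- σ(H) = Vol(Sⁿ⁻¹)·((n−2)/4)·∫ λ^{−2−n/2}|∇λ|² dq ≥ 0, and
σ(H) = 0 iff λ is constant.  The Liouville integral over {H = 1/2} is written
in the parametrization p = λ(q)^{−1/2}σ, dμ = λ^{−n/2} dσ dq, with dσ the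
surface measure (Measure.toSphere) on the unit sphere Sⁿ⁻¹ in p-space. -/
theorem stmt_15 {n : ℕ} (hn : 3 ≤ n) (l : (Fin n → ℝ) → ℝ)
    (hsmooth : ContDiff ℝ (⊤ : ℕ∞) l) (hpos : ∀ x, 0 < l x) (hper : Zperiodic l)
    (H : (Fin n → ℝ) → (Fin n → ℝ) → ℝ)
    (hH : H = fun p q => l q / 2 * ∑ i, (p i) ^ 2)
    (σH : ℝ)
    (hσH : σH =
      ∫ σ : Metric.sphere (0 : EuclideanSpace ℝ (Fin n)) 1,
        (∫ q in cube n,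
          Matrix.trace
              (Hqq H (l q ^ (-(1 : ℝ) / 2) • fun i => (σ : EuclideanSpace ℝ (Fin n)) i) q -
                Hqp H (l q ^ (-(1 : ℝ) / 2) • fun i => (σ : EuclideanSpace ℝ (Fin n)) i) q *
                  (Hpp H (l q ^ (-(1 : ℝ) / 2) • fun i => (σ : EuclideanSpace ℝ (Fin n)) i) q)⁻¹ *
                  Hpq H (l q ^ (-(1 : ℝ) / 2) • fun i => (σ : EuclideanSpace ℝ (Fin n)) i) q) *
            l q ^ (-(n : ℝ) / 2))
        ∂((volume : Measure (EuclideanSpace ℝ (Fin n))).toSphere)) :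
    σH =
      ((volume : Measure (EuclideanSpace ℝ (Fin n))).toSphere Set.univ).toReal *
        (((n : ℝ) - 2) / 4) *
        ∫ q in cube n, l q ^ (-2 - (n : ℝ) / 2) * gradSq l q ∧
    0 ≤ σH ∧
    (σH = 0 ↔ ∀ x y, l x = l y) := by

  obtain ⟨m, rfl⟩ : ∃ m, n = m + 1 := ⟨n - 1, by omega⟩
  rw [funext fun σ => inner_eq hsmooth hpos hper hH σ, integral_const, smul_eq_mul, measureReal_def] at hσH
  have hT : 0 < ((volume : Measure (EuclideanSpace ℝ (Fin (m+1)))).toSphere Set.univ).toReal := by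
    rw [ENNReal.toReal_pos_iff]
    constructor
    · rw [Measure.toSphere_apply_univ]
      apply ENNReal.mul_pos
      · simp [finrank_euclideanSpace_fin]
      · exact (Metric.measure_ball_pos volume 0 one_pos).ne'
    · exact measure_lt_top _ _
  have hcoef : (0:ℝ) < ((↑(m+1):ℝ) - 2)/4 := by
    have h3 : (3:ℝ) ≤ (↑(m+1):ℝ) := by exact_mod_cast hn
    linarith
  have hInn : 0 ≤ ∫ q in cube (m+1), l q ^ (-2 - (↑(m+1):ℝ)/2) * gradSq l q :=
    setIntegral_nonneg measurableSet_cube fun q _ =>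
      mul_nonneg (Real.rpow_nonneg (hpos q).le _)
        (Finset.sum_nonneg fun i _ => sq_nonneg _)
  refine ⟨by rw [hσH]; ring, by rw [hσH]; exact mul_nonneg hT.le (mul_nonneg hcoef.le hInn), ?_⟩
  constructor
  · intro h0
    have hI : (∫ q in cube (m+1), l q ^ (-2 - (↑(m+1):ℝ)/2) * gradSq l q) = 0 := by
      by_contra hne
      have hIpos : 0 < ∫ q in cube (m+1), l q ^ (-2 - (↑(m+1):ℝ)/2) * gradSq l q :=
        lt_of_le_of_ne hInn (Ne.symm hne)
      have hgt : 0 < σH := by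
        rw [hσH]; exact mul_pos hT (mul_pos hcoef hIpos)
      rw [h0] at hgt
      exact lt_irrefl 0 hgt
    have hcont : Continuous fun q => l q ^ (-2 - (↑(m+1):ℝ)/2) * gradSq l q :=
      ((contDiff_rpow hsmooth hpos _).continuous).mul
        (continuous_finset_sum _ fun i _ => ((contDiff_pd hsmooth i).continuous).pow 2)
    have hae := (setIntegral_eq_zero_iff_of_nonneg_ae
      (Filter.Eventually.of_forall fun q =>
        mul_nonneg (Real.rpow_nonneg (hpos q).le _)
          (Finset.sum_nonneg fun i _ => sq_nonneg _))
      (integrableOn_cube hcont)).mp hI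
    have heqOn : Set.EqOn (fun q => l q ^ (-2 - (↑(m+1):ℝ)/2) * gradSq l q) 0 (cube (m+1)) :=
      Measure.eqOn_of_ae_eq hae hcont.continuousOn continuousOn_const
        cube_subset_closure_interior
    have hGcube : ∀ q ∈ cube (m+1), gradSq l q = 0 := by
      intro q hq
      have h := heqOn hq
      simp only [Pi.zero_apply] at h
      rcases mul_eq_zero.mp h with h' | h'
      · exact absurd h' (Real.rpow_pos_of_pos (hpos q) _).ne'
      · exact h'
    have hGall : ∀ x, gradSq l x = 0 := by
      intro x
      obtain ⟨y, hy, mm, rfl⟩ := exists_cube_rep x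
      have hper' : gradSq l (y + fun i => (mm i : ℝ)) = gradSq l y :=
        Finset.sum_congr rfl fun i _ => by
          rw [pd_periodic (hsmooth.differentiable (by simp)) hper i y mm]
      rw [hper', hGcube y hy]
    have hpd0 : ∀ (x : Fin (m+1) → ℝ) (i : Fin (m+1)), pd i l x = 0 := by
      intro x i
      have h := hGall x
      rw [gradSq] at h
      have h2 := (Finset.sum_eq_zero_iff_of_nonneg
        fun j _ => sq_nonneg (pd j l x)).mp h i (Finset.mem_univ i)
      exact pow_eq_zero_iff two_ne_zero |>.mp h2
    intro x y
    apply is_const_of_fderiv_eq_zero (hsmooth.differentiable (by simp)) _ x y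
    intro z
    ext v
    rw [ContinuousLinearMap.zero_apply]
    have hv : v = ∑ i, v i • (Pi.single i (1:ℝ) : Fin (m+1) → ℝ) := by
      have h1 : ∀ i : Fin (m+1), v i • (Pi.single i (1:ℝ) : Fin (m+1) → ℝ)
          = Pi.single i (v i) := by
        intro i
        rw [← Pi.single_smul]
        norm_num
      rw [Finset.sum_congr rfl fun i _ => h1 i, Finset.univ_sum_single v]
    rw [hv, map_sum]
    refine Finset.sum_eq_zero fun i _ => ?_
    rw [(fderiv ℝ l z).map_smul]
    have hz := hpd0 z i
    rw [pd] at hz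
    rw [hz, smul_zero]
  · intro hc
    have hG : ∀ q : Fin (m+1) → ℝ, gradSq l q = 0 := by
      intro q
      have hlc : l = fun _ => l 0 := funext fun x => hc x 0
      have hpdz : ∀ i : Fin (m+1), pd i l q = 0 := by
        intro i
        rw [pd, hlc]
        simp
      simp [gradSq, hpdz]
    have hIz : (∫ q in cube (m+1), l q ^ (-2 - (↑(m+1):ℝ)/2) * gradSq l q) = 0 := by
      calc (∫ q in cube (m+1), l q ^ (-2 - (↑(m+1):ℝ)/2) * gradSq l q)
          = ∫ _q in cube (m+1), (0:ℝ) :=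
            setIntegral_congr_fun measurableSet_cube fun q _ => by rw [hG q, mul_zero]
        _ = 0 := by simp
    rw [hσH, hIz, mul_zero, mul_zero]
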